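/- Fix n ≥ 1, grid spacing h > 0, time step τ > 0, and real parameters p₁ ≠ 0, p₂. Define on grid functions f : (Fin n → ℤ) → ℝ the operators (δᵢf)(k) = (f(k+eᵢ) − f(k−eᵢ))/(2h), (δ⁽²⁾ᵢᵢf)(k) = (f(k+eᵢ) − 2f(k) + f(k−eᵢ))/h², and δ⁽²⁾ᵢₘ = δᵢ∘δₘ for i ≠ m. Let A0, Π0, λ (and primed versions) and Aᵢ, Πᵢ (and primed versions) be grid fields at consecutive time levels satisfying: (A0′ − A0)/τ = (1/4)(λ′ + λ)(Π0′ + Π0) − (1/2)Σᵢ δᵢ(Aᵢ′ + Aᵢ); and for each i the standard-scheme momentum evolution (Πᵢ′ − Πᵢ)/τ = (p₂/2)(Aᵢ′ + Aᵢ) − (1/2)δᵢ(Π0′ + Π0) + (1/(2p₁))Σₘ[δ⁽²⁾ₘₘ(Aᵢ′ + Aᵢ) − δ⁽²⁾ᵢₘ(Aₘ′ + Aₘ)]. Define C₁ = Π0, C₁′ = Π0′, C₂ = −p₂·A0 − Σᵢ δᵢΠᵢ, C₂′ = −p₂·A0′ − Σᵢ δᵢΠᵢ′. Then (C₂′ −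 C₂)/τ = −(p₂/4)(λ′ + λ)(C₁′ + C₁) + (1/2)Σᵢ δᵢδᵢ(C₁′ + C₁) − (1/(2p₁))Σᵢ Σₘ[(δᵢ∘δ⁽²⁾ₘₘ − δₘ∘δ⁽²⁾ₘᵢ)(Aᵢ′ + Aᵢ)]. -/
import Mathlib


open scoped BigOperators

/-- The `i`-th standard unit vector of `ℤⁿ`. -/
def gridE {n : ℕ} (i : Fin n) : Fin n → ℤ := fun j => if j = i then 1 else 0

/-- First-order central difference operator in direction `i` with grid spacing `h`:
`(δᵢf)(k) = (f(k + eᵢ) − f(k − eᵢ))/(2h)`. -/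
noncomputable def cdiff {n : ℕ} (h : ℝ) (i : Fin n) (f : (Fin n → ℤ) → ℝ) :
    (Fin n → ℤ) → ℝ :=
  fun k => (f (k + gridE i) - f (k - gridE i)) / (2 * h)

/-- Second-order central difference operator: for `i = m` the standard
second-order central difference `(f(k+eᵢ) − 2f(k) + f(k−eᵢ))/h²`, and for
`i ≠ m` the composition `δᵢ∘δₘ` of first-order central differences. -/
noncomputable def cdiff2 {n : ℕ} (h : ℝ) (i m : Fin n) (f : (Fin n → ℤ) → ℝ) :
    (Fin n → ℤ) → ℝ :=
  if i = m then fun k => (f (k + gridE i) - 2 * f k + f (k - gridE i)) / h ^ 2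
  else cdiff h i (cdiff h m f)

/-- Constraint-violation identity for the standard scheme: under the `A⁰`
midpoint evolution and the standard-scheme momentum evolution, the Gauss-type
constraint satisfies the structure-preserving propagation law only up to the
extra term `−(1/(2p₁))ΣᵢΣₘ(δᵢ∘δ⁽²⁾ₘₘ − δₘ∘δ⁽²⁾ₘᵢ)(Aᵢ′ + Aᵢ)`. -/
theorem standard_scheme_constraint_violation {n : ℕ} (hn : 1 ≤ n) (h τ : ℝ)
    (hh : 0 < h) (hτ : 0 < τ) (p₁ p₂ : ℝ) (hp₁ : p₁ ≠ 0)
    (A0 A0' Pi0 Pi0' lam lam' : (Fin n → ℤ) → ℝ)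
    (A A' Pi Pi' : Fin n → (Fin n → ℤ) → ℝ)
    (eA0 : ∀ k, (A0' k - A0 k) / τ =
        (1 / 4) * (lam' k + lam k) * (Pi0' k + Pi0 k)
        - (1 / 2) * ∑ i : Fin n, cdiff h i (fun x => A' i x + A i x) k)
    (ePi : ∀ (i : Fin n) (k), (Pi' i k - Pi i k) / τ =
        (p₂ / 2) * (A' i k + A i k)
        - (1 / 2) * cdiff h i (fun x => Pi0' x + Pi0 x) k
        + (1 / (2 * p₁)) * ∑ m : Fin n,
            (cdiff2 h m m (fun x => A' i x + A i x) k
              - cdiff2 h i m (fun x => A' m x + A m x) k))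
    (C₁ C₁' C₂ C₂' : (Fin n → ℤ) → ℝ)
    (hC₁ : C₁ = Pi0) (hC₁' : C₁' = Pi0')
    (hC₂ : C₂ = fun k => -p₂ * A0 k - ∑ i : Fin n, cdiff h i (Pi i) k)
    (hC₂' : C₂' = fun k => -p₂ * A0' k - ∑ i : Fin n, cdiff h i (Pi' i) k) :
    ∀ k, (C₂' k - C₂ k) / τ =
        -(p₂ / 4) * (lam' k + lam k) * (C₁' k + C₁ k)
        + (1 / 2) * ∑ i : Fin n, cdiff h i (cdiff h i (fun x => C₁' x + C₁ x)) k
        - (1 / (2 * p₁)) * ∑ i : Fin n, ∑ m : Fin n,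
            (cdiff h i (cdiff2 h m m (fun x => A' i x + A i x)) k
              - cdiff h m (cdiff2 h m i (fun x => A' i x + A i x)) k) := by
  intro k
  have hτ' : τ ≠ 0 := ne_of_gt hτ
  subst hC₁ hC₁' hC₂ hC₂'
  -- pointwise form of the momentum evolution
  have hPi' : ∀ (i : Fin n) (x : Fin n → ℤ), Pi' i x = Pi i x + τ *
      ((p₂ / 2) * (A' i x + A i x)
        - (1 / 2) * cdiff h i (fun y => C₁' y + C₁ y) x
        + (1 / (2 * p₁)) * ∑ m : Fin n,
            (cdiff2 h m m (fun y => A' i y + A i y) x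
              - cdiff2 h i m (fun y => A' m y + A m y) x)) := by
    intro i x
    have h2 := (div_eq_iff hτ').mp (ePi i x)
    linarith [h2]
  have key : ∀ i : Fin n, cdiff h i (Pi' i) k - cdiff h i (Pi i) k = τ *
      ((p₂ / 2) * cdiff h i (fun x => A' i x + A i x) k
        - (1 / 2) * cdiff h i (cdiff h i (fun x => C₁' x + C₁ x)) k
        + (1 / (2 * p₁)) * ∑ m : Fin n,
            (cdiff h i (cdiff2 h m m (fun x => A' i x + A i x)) k
              - cdiff h i (cdiff2 h i m (fun x => A' m x + A m x)) k)) := by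
    intro i
    simp only [cdiff]
    rw [hPi' i (k + gridE i), hPi' i (k - gridE i)]
    simp only [cdiff, add_sub_cancel_right, sub_add_cancel,
      Finset.sum_sub_distrib, ← Finset.sum_div]
    ring
  have h2 : (∑ i : Fin n, cdiff h i (Pi' i) k) - ∑ i : Fin n, cdiff h i (Pi i) k
      = τ * ((p₂ / 2) * ∑ i : Fin n, cdiff h i (fun x => A' i x + A i x) k
        - (1 / 2) * ∑ i : Fin n, cdiff h i (cdiff h i (fun x => C₁' x + C₁ x)) k
        + (1 / (2 * p₁)) *
          ((∑ i : Fin n, ∑ m : Fin n,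
              cdiff h i (cdiff2 h m m (fun x => A' i x + A i x)) k)
            - ∑ i : Fin n, ∑ m : Fin n,
              cdiff h i (cdiff2 h i m (fun x => A' m x + A m x)) k)) := by
    rw [← Finset.sum_sub_distrib, Finset.sum_congr rfl fun i _ => key i,
      ← Finset.mul_sum]
    simp only [Finset.sum_sub_distrib, Finset.sum_add_distrib, ← Finset.mul_sum]
  have h3 : (∑ i : Fin n, ∑ m : Fin n,
        cdiff h i (cdiff2 h i m (fun x => A' m x + A m x)) k)
      = ∑ i : Fin n, ∑ m : Fin n,
        cdiff h m (cdiff2 h m i (fun x => A' i x + A i x)) k :=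
    Finset.sum_comm
  rw [h3] at h2
  have h1 := (div_eq_iff hτ').mp (eA0 k)
  have h4 : (∑ i : Fin n, ∑ m : Fin n,
        (cdiff h i (cdiff2 h m m (fun x => A' i x + A i x)) k
          - cdiff h m (cdiff2 h m i (fun x => A' i x + A i x)) k))
      = (∑ i : Fin n, ∑ m : Fin n,
          cdiff h i (cdiff2 h m m (fun x => A' i x + A i x)) k)
        - ∑ i : Fin n, ∑ m : Fin n,
          cdiff h m (cdiff2 h m i (fun x => A' i x + A i x)) k := by
    simp only [Finset.sum_sub_distrib]
  simp only []
  rw [div_eq_iff hτ', h4]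
  linear_combination (-p₂) * h1 - h2
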